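/- Let T = {a,b} ⊆ [n-1] with a < n/2, 2n/3 < b, and a + b + 1 ≤ n. For every automorphism ρ of the general position graph Γ(n,T) and every a-subset A of [n], there exists an a-subset D of [n] such that {f^ρ : f ∈ F^(T|A)} = F^(T|D); that is, the partition Σ = {F^(T|A) : A ⊆ [n], |A| = a} is a system of blocks for Aut(Γ(n,T)) acting on the flags of type T. -/

import Mathlib

open Finset

/-- A flag of type `{a,b}` on `[n]`: a pair `A ⊂ B` of subsets of `Fin n`
with `|A| = a` and `|B| = b`. -/
abbrev Flag2 (n a b : ℕ) : Type :=
  {p : Finset (Fin n) × Finset (Fin n) // p.1 ⊂ p.2 ∧ p.1.card = a ∧ p.2.card = b}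

/-- Two sets are "in general position": disjoint or with union everything. -/
def gp {n : ℕ} (X Y : Finset (Fin n)) : Prop :=
  X ∩ Y = ∅ ∨ X ∪ Y = Finset.univ

theorem gp_comm {n : ℕ} {X Y : Finset (Fin n)} (h : gp X Y) : gp Y X := by
  rcases h with h | h
  · exact Or.inl (by rwa [Finset.inter_comm])
  · exact Or.inr (by rwa [Finset.union_comm])

/-- Two flags are in general position. -/
def GenPos {n a b : ℕ} (f g : Flag2 n a b) : Prop :=
  gp f.1.1 g.1.1 ∧ gp f.1.1 g.1.2 ∧ gp f.1.2 g.1.1 ∧ gp f.1.2 g.1.2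

instance {n a b : ℕ} (f g : Flag2 n a b) : Decidable (GenPos f g) := by
  unfold GenPos gp; infer_instance

/-- The general position graph `Γ(n, {a,b})`. -/
def GPGraph (n a b : ℕ) : SimpleGraph (Flag2 n a b) where
  Adj f g := f ≠ g ∧ GenPos f g
  symm := ⟨by
    rintro f g ⟨hne, h1, h2, h3, h4⟩
    exact ⟨hne.symm, gp_comm h1, gp_comm h3, gp_comm h2, gp_comm h4⟩⟩
  loopless := ⟨fun f h => h.1 rfl⟩

/-- `N(f,g)`: the set of flags of type `{a,b}` in general position with both `f` and `g`. -/
def Nset {n a b : ℕ} (f g : Flag2 n a b) : Finset (Flag2 n a b) :=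
  Finset.univ.filter fun h => GenPos f h ∧ GenPos g h

/-! ### Arithmetic lemmas -/

lemma key_ineq (n a b : ℕ) (ha : 1 ≤ a) (hb3 : 2 * n < 3 * b) (hab : a + b + 1 ≤ n) :
    Nat.choose (n - b) a * Nat.choose (b - a - 1) (2 * b - n) <
      Nat.choose (n - b - 1) a * Nat.choose (b - a - 1) (2 * b - n - 1) := by
  set p := n - b with hp
  have hpa : a + 1 ≤ p := by omega
  have hbp : 2 * b - n = b - p := by omega
  have hn2b : n + 1 ≤ 2 * b := by omega
  set c1 := Nat.choose p a
  set c1' := Nat.choose (p - 1) a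
  set c2 := Nat.choose (b - a - 1) (b - p)
  set c2' := Nat.choose (b - a - 1) (b - p - 1)
  have e1 : c1' * p = c1 * (p - a) := by
    have := Nat.choose_mul_succ_eq (p - 1) a
    simp only [c1', c1]
    have h1 : p - 1 + 1 = p := by omega
    rw [h1] at this
    exact this
  have e2 : c2 * (b - p) = c2' * (p - a) := by
    have := Nat.choose_succ_right_eq (b - a - 1) (b - p - 1)
    have h1 : b - p - 1 + 1 = b - p := by omega
    have h2 : b - a - 1 - (b - p - 1) = p - a := by omega
    rw [h1, h2] at this
    exact this
  have hc1 : 0 < c1 := Nat.choose_pos (by omega)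
  have hc2 : 0 < c2 := Nat.choose_pos (by omega)
  have h3 : (c1' * c2') * (p * (p - a)) = (c1 * c2) * ((b - p) * (p - a)) := by
    calc (c1' * c2') * (p * (p - a)) = (c1' * p) * (c2' * (p - a)) := by ring
      _ = (c1 * (p - a)) * (c2 * (b - p)) := by rw [e1, ← e2]
      _ = (c1 * c2) * ((b - p) * (p - a)) := by ring
  have hlt : (c1 * c2) * (p * (p - a)) < (c1' * c2') * (p * (p - a)) := by
    rw [h3]
    exact Nat.mul_lt_mul_of_pos_left
      (Nat.mul_lt_mul_of_pos_right (by omega) (by omega)) (Nat.mul_pos hc1 hc2)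
  rw [hbp]
  exact Nat.lt_of_mul_lt_mul_right hlt

lemma arith_bound (n a b i j : ℕ) (ha : 1 ≤ a) (hb3 : 2 * n < 3 * b)
    (hab : a + b + 1 ≤ n) (hj : a + 1 ≤ j) (hji : j ≤ i) (hib : i ≤ b)
    (hi2 : 2 * b ≤ n + i) :
    Nat.choose (n + i - 2 * b) a * Nat.choose (i - j) (b + i - n) <
      Nat.choose (n - b - 1) a * Nat.choose (b - a - 1) (2 * b - n - 1) := by
  have step1 : Nat.choose (n + i - 2 * b) a * Nat.choose (i - j) (b + i - n) ≤
      Nat.choose (n + i - 2 * b) a * Nat.choose (i - (a + 1)) (b + i - n) :=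
    Nat.mul_le_mul_left _ (Nat.choose_le_choose _ (by omega))
  have mono : ∀ m, i ≤ m → m ≤ b →
      Nat.choose (n + i - 2 * b) a * Nat.choose (i - (a + 1)) (b + i - n) ≤
      Nat.choose (n + m - 2 * b) a * Nat.choose (m - (a + 1)) (b + m - n) := by
    intro m him
    induction m, him using Nat.le_induction with
    | base => intro _; exact le_refl _
    | succ m' hm ih =>
      intro hm'b
      refine le_trans (ih (by omega)) ?_
      apply Nat.mul_le_mul
      · exact Nat.choose_le_choose _ (by omega)
      · have h1 : m' + 1 - (a + 1) = (m' - (a + 1)) + 1 := by omega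
        have h2 : b + (m' + 1) - n = (b + m' - n) + 1 := by omega
        rw [h1, h2, Nat.choose_succ_succ]
        exact Nat.le_add_right _ _
  have step2 := mono b (by omega) (le_refl b)
  have hfin : Nat.choose (n + b - 2 * b) a * Nat.choose (b - (a + 1)) (b + b - n) <
      Nat.choose (n - b - 1) a * Nat.choose (b - a - 1) (2 * b - n - 1) := by
    have h1 : n + b - 2 * b = n - b := by omega
    have h2 : b - (a + 1) = b - a - 1 := by omega
    have h3 : b + b - n = 2 * b - n := by omega
    rw [h1, h2, h3]
    exact key_ineq n a b ha hb3 hab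
  omega

/-! ### Basic facts about `gp` and `GenPos` -/

section Basics

variable {n a b : ℕ}

lemma gp_small {X Y : Finset (Fin n)} (h : gp X Y) (hc : X.card + Y.card < n) :
    X ∩ Y = ∅ := by
  rcases h with h | h
  · exact h
  · exfalso
    have h1 : (X ∪ Y).card ≤ X.card + Y.card := card_union_le X Y
    rw [h] at h1
    simp [Finset.card_univ] at h1
    omega

lemma gp_big {X Y : Finset (Fin n)} (h : gp X Y) (hc : n < X.card + Y.card) :
    X ∪ Y = univ := by
  rcases h with h | h
  · exfalso
    have hd : Disjoint X Y := disjoint_iff_inter_eq_empty.mpr h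
    have h1 : (X ∪ Y).card = X.card + Y.card := card_union_of_disjoint hd
    have h2 : (X ∪ Y).card ≤ n := by simpa using card_le_univ (X ∪ Y)
    omega
  · exact h

lemma genPos_necc (hb3 : 2 * n < 3 * b) (hab : a + b + 1 ≤ n) {f h : Flag2 n a b}
    (hg : GenPos f h) :
    f.1.1 ∩ h.1.2 = ∅ ∧ h.1.1 ∩ f.1.2 = ∅ ∧ f.1.2 ∪ h.1.2 = univ := by
  obtain ⟨-, g2, g3, g4⟩ := hg
  refine ⟨gp_small g2 ?_, ?_, gp_big g4 ?_⟩
  · rw [f.2.2.1, h.2.2.2]; omega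
  · have := gp_small g3 (by rw [f.2.2.2, h.2.2.1]; omega)
    rwa [Finset.inter_comm] at this
  · rw [f.2.2.2, h.2.2.2]; omega

lemma genPos_irrefl (ha : 1 ≤ a) (hab : a + b + 1 ≤ n) (f : Flag2 n a b) :
    ¬ GenPos f f := by
  rintro ⟨g1, -, -, -⟩
  rcases g1 with h | h
  · rw [Finset.inter_self] at h
    have := f.2.2.1; rw [h] at this; simp at this; omega
  · rw [Finset.union_self] at h
    have := f.2.2.1; rw [h, Finset.card_univ] at this; simp at this; omega

lemma adj_iff (ha : 1 ≤ a) (hab : a + b + 1 ≤ n) {f h : Flag2 n a b} :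
    (GPGraph n a b).Adj f h ↔ GenPos f h :=
  ⟨fun x => x.2, fun x => ⟨fun e => genPos_irrefl ha hab h (e ▸ x), x⟩⟩

lemma mem_Nset {f g h : Flag2 n a b} :
    h ∈ Nset f g ↔ GenPos f h ∧ GenPos g h := by
  simp [Nset]

end Basics

/-! ### The counting lemma -/

section Counting

variable {n a b : ℕ}

lemma nset_card_eq (ha : 1 ≤ a) (hb3 : 2 * n < 3 * b) (hab : a + b + 1 ≤ n)
    {f g : Flag2 n a b}
    (hS : f.1.1 ∪ g.1.1 ⊆ f.1.2 ∩ g.1.2) :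
    (Nset f g).card =
      Nat.choose ((f.1.2 ∪ g.1.2)ᶜ.card) a *
        Nat.choose (((f.1.2 ∩ g.1.2) \ (f.1.1 ∪ g.1.1)).card)
          (b - ((f.1.2 ∩ g.1.2)ᶜ.card)) := by
  classical
  obtain ⟨⟨A, B⟩, hfs, hAc, hBc⟩ := f
  obtain ⟨⟨A', B'⟩, hgs, hA'c, hB'c⟩ := g
  simp only at hAc hBc hA'c hB'c hfs hgs hS ⊢
  set M : Finset (Fin n) := (B ∩ B')ᶜ with hM
  set W : Finset (Fin n) := (B ∪ B')ᶜ with hW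
  set S : Finset (Fin n) := A ∪ A' with hSdef
  set E0 : Finset (Fin n) := (B ∩ B') \ S with hE0
  have hun : (B ∪ B').card ≤ n := by simpa using card_le_univ (B ∪ B')
  have hui : (B ∪ B').card + (B ∩ B').card = 2 * b := by
    have := card_union_add_card_inter B B'
    omega
  have hMcard : M.card = n - (B ∩ B').card := by
    rw [hM, card_compl, Fintype.card_fin]
  have hMb : M.card ≤ b := by omega
  have hWM : W ⊆ M := by
    rw [hW, hM]
    exact compl_subset_compl.mpr inter_subset_union
  have hWB : W ⊆ Bᶜ := by
    rw [hW]
    exact compl_subset_compl.mpr subset_union_left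
  have hWB' : W ⊆ B'ᶜ := by
    rw [hW]
    exact compl_subset_compl.mpr subset_union_right
  have hBM : B ∪ M = univ := by
    rw [hM, compl_inter, ← union_assoc, union_compl]; simp
  have hB'M : B' ∪ M = univ := by
    rw [hM, compl_inter, union_comm Bᶜ B'ᶜ, ← union_assoc, union_compl]; simp
  have hAB : A ⊆ B := hfs.1
  have hA'B' : A' ⊆ B' := hgs.1
  have hASdisjM : Disjoint S M := by
    rw [hM]
    exact disjoint_compl_right.mono_left hS
  -- the common part of the two forward directions
  have hMDgen : ∀ h : Flag2 n a b,
      GenPos ⟨(A, B), hfs, hAc, hBc⟩ h → GenPos ⟨(A', B'), hgs, hA'c, hB'c⟩ h →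
      M ⊆ h.1.2 := by
    intro h hh1 hh2
    obtain ⟨nf1, nf2, nf3⟩ := genPos_necc hb3 hab hh1
    obtain ⟨ng1, ng2, ng3⟩ := genPos_necc hb3 hab hh2
    intro x hx
    rw [hM, mem_compl, mem_inter] at hx
    push_neg at hx
    by_cases hxB : x ∈ B
    · have hxB' : x ∉ B' := hx hxB
      have : x ∈ B' ∪ h.1.2 := by rw [ng3]; exact mem_univ x
      rcases mem_union.mp this with h' | h'
      · exact absurd h' hxB'
      · exact h'
    · have : x ∈ B ∪ h.1.2 := by rw [nf3]; exact mem_univ x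
      rcases mem_union.mp this with h' | h'
      · exact absurd h' hxB
      · exact h'
  have key : (Nset (⟨(A, B), hfs, hAc, hBc⟩ : Flag2 n a b) ⟨(A', B'), hgs, hA'c, hB'c⟩).card
      = (powersetCard a W ×ˢ powersetCard (b - M.card) E0).card := by
    refine Finset.card_bij' (fun h _ => (h.1.1, h.1.2 \ M))
      (fun p hp => ⟨(p.1, M ∪ p.2), ?_⟩) ?_ ?_ ?_ ?_
    · -- flag property of the inverse image
      rw [mem_product, mem_powersetCard, mem_powersetCard] at hp
      obtain ⟨⟨hp1, hp1c⟩, hp2, hp2c⟩ := hp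
      have hdisj : Disjoint M p.2 :=
        disjoint_compl_left.mono_right (hp2.trans sdiff_subset)
      have hcard : (M ∪ p.2).card = b := by
        rw [card_union_of_disjoint hdisj, hp2c]
        omega
      refine ⟨?_, hp1c, hcard⟩
      refine Finset.ssubset_def.mpr ⟨(hp1.trans hWM).trans subset_union_left,
        fun hcon => ?_⟩
      have := card_le_card hcon
      rw [hcard, hp1c] at this
      omega
    · -- forward membership
      intro h hh
      rw [mem_Nset] at hh
      obtain ⟨hh1, hh2⟩ := hh
      have hMD : M ⊆ h.1.2 := hMDgen h hh1 hh2
      obtain ⟨nf1, nf2, nf3⟩ := genPos_necc hb3 hab hh1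
      obtain ⟨ng1, ng2, ng3⟩ := genPos_necc hb3 hab hh2
      have hnotB : ∀ x ∈ h.1.1, x ∉ B := by
        intro x hx hxB
        have : x ∈ h.1.1 ∩ B := mem_inter.mpr ⟨hx, hxB⟩
        rw [nf2] at this
        exact notMem_empty x this
      have hnotB' : ∀ x ∈ h.1.1, x ∉ B' := by
        intro x hx hxB
        have : x ∈ h.1.1 ∩ B' := mem_inter.mpr ⟨hx, hxB⟩
        rw [ng2] at this
        exact notMem_empty x this
      have hCW : h.1.1 ⊆ W := by
        intro x hx
        rw [hW, mem_compl, mem_union]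
        push_neg
        exact ⟨hnotB x hx, hnotB' x hx⟩
      have hDS : ∀ x ∈ h.1.2, x ∉ S := by
        intro x hx hxS
        rw [hSdef, mem_union] at hxS
        rcases hxS with h' | h'
        · have : x ∈ A ∩ h.1.2 := mem_inter.mpr ⟨h', hx⟩
          rw [nf1] at this
          exact notMem_empty x this
        · have : x ∈ A' ∩ h.1.2 := mem_inter.mpr ⟨h', hx⟩
          rw [ng1] at this
          exact notMem_empty x this
      rw [mem_product, mem_powersetCard, mem_powersetCard]
      refine ⟨⟨hCW, h.2.2.1⟩, ?_, ?_⟩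
      · intro x hx
        rw [mem_sdiff] at hx
        obtain ⟨hxD, hxM⟩ := hx
        rw [hM, mem_compl, not_not] at hxM
        rw [hE0, mem_sdiff]
        exact ⟨hxM, hDS x hxD⟩
      · rw [card_sdiff_of_subset hMD, h.2.2.2]
    · -- backward membership
      intro p hp
      rw [mem_product, mem_powersetCard, mem_powersetCard] at hp
      obtain ⟨⟨hp1, hp1c⟩, hp2, hp2c⟩ := hp
      rw [mem_Nset]
      have hAM : Disjoint A M := hASdisjM.mono_left subset_union_left
      have hA'M : Disjoint A' M := hASdisjM.mono_left subset_union_right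
      have hSE0 : Disjoint S E0 := sdiff_disjoint.symm
      have hAp2 : Disjoint A p.2 :=
        (hSE0.mono_left subset_union_left).mono_right hp2
      have hA'p2 : Disjoint A' p.2 :=
        (hSE0.mono_left subset_union_right).mono_right hp2
      have hp1Bc : ∀ X : Finset (Fin n), X ⊆ B → X ∩ p.1 = ∅ := by
        intro X hXB
        rw [← disjoint_iff_inter_eq_empty]
        have : Disjoint p.1 B := le_compl_iff_disjoint_right.mp (hp1.trans hWB)
        exact this.symm.mono_left hXB
      have hp1B'c : ∀ X : Finset (Fin n), X ⊆ B' → X ∩ p.1 = ∅ := by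
        intro X hXB
        rw [← disjoint_iff_inter_eq_empty]
        have : Disjoint p.1 B' := le_compl_iff_disjoint_right.mp (hp1.trans hWB')
        exact this.symm.mono_left hXB
      constructor
      · refine ⟨Or.inl (hp1Bc A hAB), Or.inl ?_, Or.inl (hp1Bc B subset_rfl), Or.inr ?_⟩
        · rw [← disjoint_iff_inter_eq_empty, disjoint_union_right]
          exact ⟨hAM, hAp2⟩
        · rw [← union_assoc, hBM]
          simp
      · refine ⟨Or.inl (hp1B'c A' hA'B'), Or.inl ?_, Or.inl (hp1B'c B' subset_rfl), Or.inr ?_⟩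
        · rw [← disjoint_iff_inter_eq_empty, disjoint_union_right]
          exact ⟨hA'M, hA'p2⟩
        · rw [← union_assoc, hB'M]
          simp
    · -- left inverse
      intro h hh
      rw [mem_Nset] at hh
      have hMD : M ⊆ h.1.2 := hMDgen h hh.1 hh.2
      apply Subtype.ext
      apply Prod.ext
      · rfl
      · exact union_sdiff_of_subset hMD
    · -- right inverse
      intro p hp
      rw [mem_product, mem_powersetCard, mem_powersetCard] at hp
      obtain ⟨⟨hp1, hp1c⟩, hp2, hp2c⟩ := hp
      have hdisj : Disjoint M p.2 :=
        disjoint_compl_left.mono_right (hp2.trans sdiff_subset)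
      have h1 : (M ∪ p.2) \ M = p.2 := union_sdiff_cancel_left hdisj
      simp only [h1]
  rw [key, card_product, card_powersetCard, card_powersetCard]

end Counting


/-! ### The two claims -/

section Claims

variable {n a b : ℕ}

def Kconst (n a b : ℕ) : ℕ :=
  Nat.choose (n - b - 1) a * Nat.choose (b - a - 1) (2 * b - n - 1)

lemma Kconst_pos (ha : 1 ≤ a) (hb3 : 2 * n < 3 * b) (hab : a + b + 1 ≤ n) :
    0 < Kconst n a b := by
  apply Nat.mul_pos
  · exact Nat.choose_pos (by omega)
  · exact Nat.choose_pos (by omega)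

lemma nset_empty (hb3 : 2 * n < 3 * b) (hab : a + b + 1 ≤ n)
    {f g : Flag2 n a b} (hS : ¬ f.1.1 ∪ g.1.1 ⊆ f.1.2 ∩ g.1.2) :
    Nset f g = ∅ := by
  rw [Finset.eq_empty_iff_forall_notMem]
  intro h hh
  rw [mem_Nset] at hh
  obtain ⟨hh1, hh2⟩ := hh
  obtain ⟨nf1, nf2, nf3⟩ := genPos_necc hb3 hab hh1
  obtain ⟨ng1, ng2, ng3⟩ := genPos_necc hb3 hab hh2
  apply hS
  intro x hx
  have hxD : x ∉ h.1.2 := by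
    intro hxD
    rw [mem_union] at hx
    rcases hx with h' | h'
    · have : x ∈ f.1.1 ∩ h.1.2 := mem_inter.mpr ⟨h', hxD⟩
      rw [nf1] at this
      exact notMem_empty x this
    · have : x ∈ g.1.1 ∩ h.1.2 := mem_inter.mpr ⟨h', hxD⟩
      rw [ng1] at this
      exact notMem_empty x this
  rw [mem_inter]
  constructor
  · have : x ∈ f.1.2 ∪ h.1.2 := by rw [nf3]; exact mem_univ x
    rcases mem_union.mp this with h' | h'
    · exact h'
    · exact absurd h' hxD
  · have : x ∈ g.1.2 ∪ h.1.2 := by rw [ng3]; exact mem_univ x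
    rcases mem_union.mp this with h' | h'
    · exact h'
    · exact absurd h' hxD

lemma claim_diff (ha : 1 ≤ a) (hb3 : 2 * n < 3 * b) (hab : a + b + 1 ≤ n)
    {f g : Flag2 n a b} (hne : f.1.1 ≠ g.1.1) :
    (Nset f g).card < Kconst n a b := by
  by_cases hS : f.1.1 ∪ g.1.1 ⊆ f.1.2 ∩ g.1.2
  · rw [nset_card_eq ha hb3 hab hS]
    set i := (f.1.2 ∩ g.1.2).card with hi
    set j := (f.1.1 ∪ g.1.1).card with hj
    have hun : (f.1.2 ∪ g.1.2).card ≤ n := by simpa using card_le_univ (f.1.2 ∪ g.1.2)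
    have hui : (f.1.2 ∪ g.1.2).card + i = 2 * b := by
      have := card_union_add_card_inter f.1.2 g.1.2
      rw [f.2.2.2, g.2.2.2] at this
      omega
    have hWc : ((f.1.2 ∪ g.1.2)ᶜ).card = n + i - 2 * b := by
      rw [card_compl, Fintype.card_fin]
      omega
    have hMc : ((f.1.2 ∩ g.1.2)ᶜ).card = n - i := by
      rw [card_compl, Fintype.card_fin]
    have hE0c : (((f.1.2 ∩ g.1.2)) \ (f.1.1 ∪ g.1.1)).card = i - j :=
      card_sdiff_of_subset hS
    have hja : a + 1 ≤ j := by
      by_contra hcon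
      have hsub : f.1.1 ⊆ f.1.1 ∪ g.1.1 := subset_union_left
      have h1 : f.1.1 = f.1.1 ∪ g.1.1 :=
        Finset.eq_of_subset_of_card_le hsub (by rw [f.2.2.1]; omega)
      have h2 : g.1.1 ⊆ f.1.1 := by rw [h1]; exact subset_union_right
      exact hne (Finset.eq_of_subset_of_card_le h2 (by rw [f.2.2.1, g.2.2.1])).symm
    have hji : j ≤ i := by
      have := card_le_card hS
      omega
    have hib : i ≤ b := by
      have := card_le_card (inter_subset_left : f.1.2 ∩ g.1.2 ⊆ f.1.2)
      rw [f.2.2.2] at this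
      omega
    have hi2 : 2 * b ≤ n + i := by omega
    rw [hWc, hMc, hE0c]
    have hbn : b - (n - i) = b + i - n := by omega
    rw [hbn]
    exact arith_bound n a b i j ha hb3 hab hja hji hib hi2
  · rw [nset_empty hb3 hab hS]
    simpa using Kconst_pos ha hb3 hab

end Claims

section Claims2

variable {n a b : ℕ}

lemma claim_same (ha : 1 ≤ a) (hb3 : 2 * n < 3 * b) (hab : a + b + 1 ≤ n)
    {f g : Flag2 n a b} (heq : f.1.1 = g.1.1)
    (hcap : (f.1.2 ∩ g.1.2).card + 1 = b) :
    (Nset f g).card = Kconst n a b := by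
  have hS : f.1.1 ∪ g.1.1 ⊆ f.1.2 ∩ g.1.2 := by
    rw [← heq, union_self]
    exact subset_inter f.2.1.1 (heq ▸ g.2.1.1)
  rw [nset_card_eq ha hb3 hab hS]
  have hun : (f.1.2 ∪ g.1.2).card ≤ n := by
    simpa using card_le_univ (f.1.2 ∪ g.1.2)
  have hui : (f.1.2 ∪ g.1.2).card + (f.1.2 ∩ g.1.2).card = 2 * b := by
    have := card_union_add_card_inter f.1.2 g.1.2
    rw [f.2.2.2, g.2.2.2] at this
    omega
  have hWc : ((f.1.2 ∪ g.1.2)ᶜ).card = n - b - 1 := by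
    rw [card_compl, Fintype.card_fin]
    omega
  have hMc : ((f.1.2 ∩ g.1.2)ᶜ).card = n - b + 1 := by
    rw [card_compl, Fintype.card_fin]
    omega
  have hSc : (f.1.1 ∪ g.1.1).card = a := by
    rw [← heq, union_self, f.2.2.1]
  have hE0c : ((f.1.2 ∩ g.1.2) \ (f.1.1 ∪ g.1.1)).card = b - a - 1 := by
    rw [card_sdiff_of_subset hS, hSc]
    omega
  rw [hWc, hMc, hE0c, Kconst]
  congr 1
  congr 1
  omega

lemma nset_card_map (ha : 1 ≤ a) (hab : a + b + 1 ≤ n)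
    (ρ : GPGraph n a b ≃g GPGraph n a b) (f g : Flag2 n a b) :
    (Nset (ρ f) (ρ g)).card = (Nset f g).card := by
  apply Finset.card_bij (i := fun h (_ : h ∈ Nset (ρ f) (ρ g)) => ρ.symm h)
  · intro h hh
    rw [mem_Nset] at hh ⊢
    obtain ⟨hh1, hh2⟩ := hh
    constructor
    · have h2 := ρ.symm.map_adj_iff.mpr ((adj_iff ha hab).mpr hh1)
      rw [RelIso.symm_apply_apply] at h2
      exact (adj_iff ha hab).mp h2
    · have h2 := ρ.symm.map_adj_iff.mpr ((adj_iff ha hab).mpr hh2)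
      rw [RelIso.symm_apply_apply] at h2
      exact (adj_iff ha hab).mp h2
  · intro h1 hh1 h2 hh2 hinj
    exact ρ.symm.injective hinj
  · intro h hh
    refine ⟨ρ h, ?_, by simp⟩
    rw [mem_Nset] at hh ⊢
    obtain ⟨hh1, hh2⟩ := hh
    exact ⟨(adj_iff ha hab).mp (ρ.map_adj_iff.mpr ((adj_iff ha hab).mpr hh1)),
      (adj_iff ha hab).mp (ρ.map_adj_iff.mpr ((adj_iff ha hab).mpr hh2))⟩

lemma step_lemma (ha : 1 ≤ a) (hb3 : 2 * n < 3 * b) (hab : a + b + 1 ≤ n)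
    (ρ : GPGraph n a b ≃g GPGraph n a b) {f g : Flag2 n a b}
    (heq : f.1.1 = g.1.1) (hcap : (f.1.2 ∩ g.1.2).card + 1 = b) :
    (ρ f).1.1 = (ρ g).1.1 := by
  by_contra hne
  have h1 := claim_diff ha hb3 hab hne
  rw [nset_card_map ha hab ρ f g, claim_same ha hb3 hab heq hcap] at h1
  exact lt_irrefl _ h1

lemma same_aset (ha : 1 ≤ a) (hb3 : 2 * n < 3 * b) (hab : a + b + 1 ≤ n)
    (ρ : GPGraph n a b ≃g GPGraph n a b) :
    ∀ (k : ℕ) (f g : Flag2 n a b), f.1.1 = g.1.1 → (f.1.2 \ g.1.2).card ≤ k →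
      (ρ f).1.1 = (ρ g).1.1 := by
  intro k
  induction k with
  | zero =>
    intro f g heq hc
    have h0 : f.1.2 \ g.1.2 = ∅ := Finset.card_eq_zero.mp (Nat.le_zero.mp hc)
    have hsub : f.1.2 ⊆ g.1.2 := sdiff_eq_empty_iff_subset.mp h0
    have : f.1.2 = g.1.2 :=
      Finset.eq_of_subset_of_card_le hsub (by rw [f.2.2.2, g.2.2.2])
    have hfg : f = g := Subtype.ext (Prod.ext heq this)
    rw [hfg]
  | succ k ih =>
    intro f g heq hc
    by_cases hfg : f.1.2 = g.1.2
    · have : f = g := Subtype.ext (Prod.ext heq hfg)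
      rw [this]
    · have hneF : (f.1.2 \ g.1.2).Nonempty := by
        rw [Finset.nonempty_iff_ne_empty]
        intro hcon
        exact hfg (Finset.eq_of_subset_of_card_le (sdiff_eq_empty_iff_subset.mp hcon)
          (by rw [f.2.2.2, g.2.2.2]))
      have hneG : (g.1.2 \ f.1.2).Nonempty := by
        rw [Finset.nonempty_iff_ne_empty]
        intro hcon
        exact hfg (Finset.eq_of_subset_of_card_le (sdiff_eq_empty_iff_subset.mp hcon)
          (by rw [f.2.2.2, g.2.2.2])).symm
      obtain ⟨x, hx⟩ := hneF
      obtain ⟨y, hy⟩ := hneG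
      rw [mem_sdiff] at hx hy
      have hxA : x ∉ f.1.1 := by
        intro hcon
        exact hx.2 (g.2.1.1 (heq ▸ hcon))
      have hyB : y ∉ f.1.2 := hy.2
      have hbpos : 1 ≤ b := by omega
      have hxB : x ∈ f.1.2 := hx.1
      have hcB1 : (insert y (f.1.2.erase x)).card = b := by
        rw [card_insert_of_notMem (fun hcon => hyB (erase_subset _ _ hcon)),
          card_erase_of_mem hxB, f.2.2.2]
        omega
      have hsubB1 : f.1.1 ⊆ insert y (f.1.2.erase x) :=
        ((subset_erase.mpr ⟨f.2.1.1, hxA⟩).trans (subset_insert _ _))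
      have hflag : f.1.1 ⊂ insert y (f.1.2.erase x) := by
        refine Finset.ssubset_def.mpr ⟨hsubB1, fun hcon => ?_⟩
        have := card_le_card hcon
        rw [hcB1, f.2.2.1] at this
        omega
      set h : Flag2 n a b := ⟨(f.1.1, insert y (f.1.2.erase x)), hflag, f.2.2.1, hcB1⟩
        with hhdef
      have step1 : (ρ f).1.1 = (ρ h).1.1 := by
        refine step_lemma ha hb3 hab ρ (f := f) (g := h) rfl ?_
        have hint : f.1.2 ∩ h.1.2 = f.1.2.erase x := by
          show f.1.2 ∩ insert y (f.1.2.erase x) = f.1.2.erase x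
          rw [Finset.inter_insert_of_notMem hyB]
          exact inter_eq_right.mpr (erase_subset _ _)
        rw [hint, card_erase_of_mem hxB, f.2.2.2]
        omega
      have step2 : (ρ h).1.1 = (ρ g).1.1 := by
        apply ih h g heq
        have hsd : h.1.2 \ g.1.2 = (f.1.2 \ g.1.2).erase x := by
          show (insert y (f.1.2.erase x)) \ g.1.2 = (f.1.2 \ g.1.2).erase x
          rw [Finset.insert_sdiff_of_mem _ hy.1]
          ext z
          simp only [mem_sdiff, mem_erase]
          tauto
        rw [hsd]
        have hxmem : x ∈ f.1.2 \ g.1.2 := mem_sdiff.mpr hx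
        rw [card_erase_of_mem hxmem]
        omega
      exact step1.trans step2

end Claims2

/-- Proposition 3.2: for `a < n/2`, `2n/3 < b`, `a + b + 1 ≤ n`, the partition of the
flags of type `{a,b}` according to their `a`-set is a system of blocks for
`Aut(Γ(n,T))`: every automorphism maps `F^(T|A)` onto some `F^(T|D)` with `|D| = a`. -/
theorem blocks_aset (n a b : ℕ) (ha : 1 ≤ a) (ha2 : 2 * a < n)
    (hb3 : 2 * n < 3 * b) (hab : a + b + 1 ≤ n)
    (ρ : GPGraph n a b ≃g GPGraph n a b)
    (A : Finset (Fin n)) (hA : A.card = a) :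
    ∃ D : Finset (Fin n), D.card = a ∧
      (Finset.univ.filter fun f : Flag2 n a b => f.1.1 = A).image (fun f => ρ f) =
        Finset.univ.filter fun f : Flag2 n a b => f.1.1 = D := by
  obtain ⟨B0, hAB0, hB0c⟩ := Finset.exists_superset_card_eq
    (s := A) (n := b) (by rw [hA]; omega)
    (by rw [Fintype.card_fin]; omega)
  have hssub : A ⊂ B0 := Finset.ssubset_def.mpr ⟨hAB0, fun hcon => by
    have := card_le_card hcon
    rw [hA, hB0c] at this
    omega⟩
  set f0 : Flag2 n a b := ⟨(A, B0), hssub, hA, hB0c⟩ with hf0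
  refine ⟨(ρ f0).1.1, (ρ f0).2.2.1, ?_⟩
  ext g'
  simp only [mem_image, mem_filter, mem_univ, true_and]
  constructor
  · rintro ⟨f, hf, rfl⟩
    exact same_aset ha hb3 hab ρ (f.1.2 \ f0.1.2).card f f0 (by rw [hf]) le_rfl
  · intro hg'
    refine ⟨ρ.symm g', ?_, by simp⟩
    have h2 : (ρ.symm g').1.1 = (ρ.symm (ρ f0)).1.1 :=
      same_aset ha hb3 hab ρ.symm (g'.1.2 \ (ρ f0).1.2).card g' (ρ f0) (by rw [hg']) le_rfl
    rw [RelIso.symm_apply_apply] at h2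
    exact h2
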